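/- Let p be an odd prime, n ≥ 1, and R a commutative ring in which p·1 = 0. Let Q(R) be the group of pairs (f₁, f₂) in D = R[ε, X]/(ε², X^{p^n}) with f₁ = ε + Σ_{i=0}^{n−1} a_i X^{p^i}, f₂ = X + Σ_{i=1}^{n−1} b_i X^{p^i}, with product ((f₁,f₂),(g₁,g₂)) ↦ (f₁ + Σ_i c_i f₂^{p^i}, f₂ + Σ_i d_i f₂^{p^i}) where g₁ = ε + Σ c_i X^{p^i}, g₂ = X + Σ d_i X^{p^i}; and let G(R) be the group of classes in R[X]/(X^{p^n}) of polynomials X + Σ_{k=1}^{n−1} b_k X^{p^k} with product f·g = g∘f. Then the map β : Q(R) → G(R) sending (f₁, f₂) to the class of f₂ (viewing X + Σ b_i X^{p^i} in R[X]/(X^{p^n})) is a surjective group homomorphism. -/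

import Mathlib

/-!
Setting `ε = 0` is a ring homomorphism `R[ε, X]/(ε², X^m) → R[X]/(X^m)`. It sends the second
coordinate `f₂ + Σ dᵢ f₂^(pⁱ)` of a product in `Q(R)` to `g₂ ∘ f₂`, which is the product of the
images in `G(R)`.
-/

open Polynomial

/-- Reduction modulo `ε`, where `ε` is the variable `0` and `X` the variable `1`. -/
noncomputable def reduceModEps (R : Type*) [CommRing R] (m : ℕ) :
    MvPolynomial (Fin 2) R ⧸
        Ideal.span {(MvPolynomial.X 0 : MvPolynomial (Fin 2) R) ^ 2, MvPolynomial.X 1 ^ m} →+*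
      R[X] ⧸ Ideal.span {(X : R[X]) ^ m} :=
  Ideal.Quotient.lift _
    ((Ideal.Quotient.mk _).comp (MvPolynomial.aeval ![0, X]).toRingHom) fun _ hf => by
      refine RingHom.mem_ker.mp (Ideal.span_le.mpr ?_ hf)
      rintro g (rfl | rfl) <;> simp

theorem reduceModEps_mk {R : Type*} [CommRing R] (m : ℕ) (f : MvPolynomial (Fin 2) R) :
    reduceModEps R m (Ideal.Quotient.mk _ f) =
      Ideal.Quotient.mk _ (MvPolynomial.aeval ![0, (X : R[X])] f) :=
  rfl

theorem Polynomial.X_add_sum_comp {R ι : Type*} [CommRing R] (s : Finset ι) (c : ι → R)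
    (e : ι → ℕ) (f : R[X]) :
    (X + ∑ i ∈ s, C (c i) * X ^ e i).comp f = f + ∑ i ∈ s, C (c i) * f ^ e i := by
  simp [sum_comp]

theorem stmt_9 (p n : ℕ)
    (R : Type) [CommRing R]
    (I : Ideal (MvPolynomial (Fin 2) R))
    (hI : I = Ideal.span {MvPolynomial.X 0 ^ 2, MvPolynomial.X 1 ^ (p ^ n)})
    (F1 F2 : (ℕ → R) → MvPolynomial (Fin 2) R)
    (hF2 : ∀ b, F2 b = MvPolynomial.X 1 +
      ∑ i ∈ Finset.Ico 1 n, MvPolynomial.C (b i) * MvPolynomial.X 1 ^ (p ^ i))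
    (Q : Set ((MvPolynomial (Fin 2) R ⧸ I) × (MvPolynomial (Fin 2) R ⧸ I)))
    (hQ : Q = {q | ∃ a b : ℕ → R,
      q = (Ideal.Quotient.mk I (F1 a), Ideal.Quotient.mk I (F2 b))})
    (J : Ideal (Polynomial R))
    (hJ : J = Ideal.span {(X : Polynomial R) ^ (p ^ n)})
    (f2p : (ℕ → R) → Polynomial R)
    (hf2p : ∀ b, f2p b = X + ∑ k ∈ Finset.Ico 1 n, C (b k) * X ^ (p ^ k))
    (G : Set (Polynomial R ⧸ J))
    (hG : G = {q | ∃ b : ℕ → R, q = Ideal.Quotient.mk J (f2p b)})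
    -- the product of Q(R)
    (mulQ : Q → Q → Q)
    (hmulQ : ∀ (a b c d : ℕ → R) (x y : Q),
      x.1 = (Ideal.Quotient.mk I (F1 a), Ideal.Quotient.mk I (F2 b)) →
      y.1 = (Ideal.Quotient.mk I (F1 c), Ideal.Quotient.mk I (F2 d)) →
      (mulQ x y).1 =
        (Ideal.Quotient.mk I (F1 a + ∑ i ∈ Finset.range n,
            MvPolynomial.C (c i) * (F2 b) ^ (p ^ i)),
         Ideal.Quotient.mk I (F2 b + ∑ i ∈ Finset.Ico 1 n,
            MvPolynomial.C (d i) * (F2 b) ^ (p ^ i))))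
    -- the product of G(R): f·g = g∘f
    (mulG : G → G → G)
    (hmulG : ∀ (b d : ℕ → R) (x y : G),
      x.1 = Ideal.Quotient.mk J (f2p b) → y.1 = Ideal.Quotient.mk J (f2p d) →
      (mulG x y).1 = Ideal.Quotient.mk J ((f2p d).comp (f2p b)))
    -- β sends (f₁, f₂) to the class of f₂
    (β : Q → G)
    (hβ : ∀ (a b : ℕ → R) (x : Q),
      x.1 = (Ideal.Quotient.mk I (F1 a), Ideal.Quotient.mk I (F2 b)) →
      (β x).1 = Ideal.Quotient.mk J (f2p b)) :
    Function.Surjective β ∧ ∀ x y : Q, β (mulQ x y) = mulG (β x) (β y) := by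
  subst hI hJ hQ hG
  set φ := reduceModEps R (p ^ n)
  have hφF2 (b : ℕ → R) : φ (Ideal.Quotient.mk _ (F2 b)) = Ideal.Quotient.mk _ (f2p b) := by
    simp [φ, reduceModEps_mk, hF2, hf2p]
  have hβφ : ∀ x, (β x).1 = φ x.1.2 := by
    intro x
    obtain ⟨a, b, hx⟩ := x.2
    rw [hβ a b x hx, hx, hφF2]
  refine ⟨fun g => ?_, fun x y => ?_⟩
  · obtain ⟨b, hb⟩ := g.2
    exact ⟨⟨_, 0, b, rfl⟩, Subtype.ext ((hβ 0 b _ rfl).trans hb.symm)⟩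
  · obtain ⟨a, b, hx⟩ := x.2
    obtain ⟨c, d, hy⟩ := y.2
    apply Subtype.ext
    rw [hβφ, hmulQ a b c d x y hx hy, hmulG b d _ _ (hβ a b x hx) (hβ c d y hy), hf2p d,
      X_add_sum_comp]
    simp [φ, reduceModEps_mk, hF2, hf2p]
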